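/- Let H be a real Hilbert space, A : H → 2^H maximally monotone, and γ > 0. Then the resolvent of γ·J_A (γ times the resolvent of A, viewed as a single-valued firmly nonexpansive operator) satisfies J_{γ J_A} = Id − γ · J_{(1+γ)^{-1} A} ∘ ((1+γ)^{-1} Id). -/

import Mathlib

/-! Put `b = J_{(1+γ)⁻¹A}((1+γ)⁻¹x)` and `p = x − γb`. Unwinding the resolvent inclusion for `b`
gives `p − b ∈ A b`, i.e. `b = J_A p` by monotonicity of `A`; hence `p + γ J_A p = x`, which says
exactly that `p` is the resolvent of `γ J_A` at `x`. -/

theorem eq_of_sub_mem_of_sub_mem_of_monotone {H : Type*} [NormedAddCommGroup H]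
    [InnerProductSpace ℝ H] {A : H → Set H}
    (hmono : ∀ x u y v, u ∈ A x → v ∈ A y → (0 : ℝ) ≤ inner ℝ (x - y) (u - v))
    {p b c : H} (hb : p - b ∈ A b) (hc : p - c ∈ A c) : b = c := by
  have h := hmono b (p - b) c (p - c) hb hc
  rw [show p - b - (p - c) = -(b - c) by abel, inner_neg_right, neg_nonneg] at h
  exact sub_eq_zero.mp (inner_self_eq_zero.mp (le_antisymm h real_inner_self_nonneg))

theorem eq_sub_smul_of_inv_smul_sub_eq {K V : Type*} [Field K] [AddCommGroup V] [Module K V]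
    {c : K} (hc : c ≠ 0) {x b u : V} (h : c⁻¹ • x - b = c⁻¹ • u) : u = x - c • b := by
  rw [← inv_smul_smul₀ hc b, ← smul_sub] at h
  exact (smul_right_injective V (inv_ne_zero hc) h).symm

theorem stmt1_general {H : Type*} [NormedAddCommGroup H] [InnerProductSpace ℝ H]
    (A : H → Set H) (γ : ℝ) (hγ : 0 < γ)
    (hmono : ∀ x u y v, u ∈ A x → v ∈ A y → (0 : ℝ) ≤ inner ℝ (x - y) (u - v))
    (JA : H → H) (hJA : ∀ x, x - JA x ∈ A (JA x))
    (JB : H → H) (hJB : ∀ x, ∃ u ∈ A (JB x), x - JB x = (1 + γ)⁻¹ • u) :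
    ∀ x : H,
      (x - γ • JB ((1 + γ)⁻¹ • x)) + γ • JA (x - γ • JB ((1 + γ)⁻¹ • x)) = x := by
  intro x
  set b := JB ((1 + γ)⁻¹ • x)
  obtain ⟨u, hu, hxu⟩ := hJB ((1 + γ)⁻¹ • x)
  have hb : x - γ • b - b ∈ A b := by
    rwa [eq_sub_smul_of_inv_smul_sub_eq (by positivity) hxu, add_smul, one_smul, ← sub_sub,
      sub_right_comm] at hu
  rw [← eq_of_sub_mem_of_sub_mem_of_monotone hmono hb (hJA _)]
  abel

/-- For a maximally monotone `A` on a real Hilbert space and `γ > 0`, the resolvent of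
`γ J_A` satisfies `J_{γ J_A} = Id − γ J_{(1+γ)⁻¹ A} ∘ ((1+γ)⁻¹ Id)`.  Here `JA` is the
resolvent of `A` and `JB` the resolvent of the scaled operator `(1+γ)⁻¹ A`. -/
theorem stmt1 {H : Type*} [NormedAddCommGroup H] [InnerProductSpace ℝ H] [CompleteSpace H]
    (A : H → Set H) (γ : ℝ) (hγ : 0 < γ)
    (hmono : ∀ x u y v, u ∈ A x → v ∈ A y → (0 : ℝ) ≤ inner ℝ (x - y) (u - v))
    (hmax : ∀ x u, (∀ y v, v ∈ A y → (0 : ℝ) ≤ inner ℝ (x - y) (u - v)) → u ∈ A x)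
    (JA : H → H) (hJA : ∀ x, x - JA x ∈ A (JA x))
    (JB : H → H) (hJB : ∀ x, ∃ u ∈ A (JB x), x - JB x = (1 + γ)⁻¹ • u) :
    ∀ x : H,
      (x - γ • JB ((1 + γ)⁻¹ • x)) + γ • JA (x - γ • JB ((1 + γ)⁻¹ • x)) = x :=
  stmt1_general A γ hγ hmono JA hJA JB hJB
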